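/- Subject reduction for the process LTS: if Γ ⊢ P : T ▸ Δ and P --c?λ(u)--> P' with u of sort S and T = p?λ(S).T' (up to subtyping T ≤ p?λ(S).T'), then P' is typable with a type T'' such that T'' ≤ T'. -/

import Mathlib

namespace MPS

/-! Process types and subtyping (Table 2 / Table 3 of the paper). -/

/-- Process (pre-)types: `end`, recursion variables, recursion, input prefixes
`p?λ(S).T`, output prefixes `q!λ(S).T`, intersections and unions.
Participants, labels and sorts are represented by natural numbers. -/
inductive PType : Type where
  | tEnd : PType
  | tVar : ℕ → PType
  | mu : PType → PType
  | inp : ℕ → ℕ → ℕ → PType → PType   -- participant, label, sort, continuation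
  | out : ℕ → ℕ → ℕ → PType → PType
  | inter : PType → PType → PType
  | union : PType → PType → PType
deriving DecidableEq

/-- The subtyping relation on process types: the least reflexive and transitive
relation closed under the rules of Table 3. -/
inductive Sub : PType → PType → Prop where
  | refl (T) : Sub T T
  | trans {T₁ T₂ T₃} : Sub T₁ T₂ → Sub T₂ T₃ → Sub T₁ T₃
  | endTop (T) : Sub T .tEnd
  | interL (T₁ T₂) : Sub (.inter T₁ T₂) T₁
  | interR (T₁ T₂) : Sub (.inter T₁ T₂) T₂
  | unionL (T₁ T₂) : Sub T₁ (.union T₁ T₂)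
  | unionR (T₁ T₂) : Sub T₂ (.union T₁ T₂)
  | inpCov {p l S T₁ T₂} : Sub T₁ T₂ → Sub (.inp p l S T₁) (.inp p l S T₂)
  | outCov {q l S T₁ T₂} : Sub T₁ T₂ → Sub (.out q l S T₁) (.out q l S T₂)
  | interGlb {T T₁ T₂} : Sub T T₁ → Sub T T₂ → Sub T (.inter T₁ T₂)
  | unionLub {T T₁ T₂} : Sub T₁ T → Sub T₂ T → Sub (.union T₁ T₂) T
  | distInter {T T₁ T₂ T₃} : Sub (.inter T₁ T₃) T → Sub (.inter T₂ T₃) T →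
      Sub (.inter (.union T₁ T₂) T₃) T
  | distUnion {T T₁ T₂ T₃} : Sub T (.union T₁ T₃) → Sub T (.union T₂ T₃) →
      Sub T (.union (.inter T₁ T₂) T₃)
  | muCov {T₁ T₂} : Sub T₁ T₂ → Sub (.mu T₁) (.mu T₂)

/-- `lin T`: labels of the topmost input prefixes of `T` (Table 1). -/
def lin : PType → Finset ℕ
  | .inp _ l _ _ => {l}
  | .inter T₁ T₂ => lin T₁ ∪ lin T₂
  | .union T₁ T₂ => lin T₁ ∪ lin T₂
  | _ => ∅

/-- `lout T`: labels of the topmost output prefixes of `T` (Table 1). -/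
def lout : PType → Finset ℕ
  | .out _ l _ _ => {l}
  | .inter T₁ T₂ => lout T₁ ∪ lout T₂
  | .union T₁ T₂ => lout T₁ ∪ lout T₂
  | _ => ∅

/-- A pre-type is a (process) type (Definition of process types) iff every
intersection has disjoint topmost input labels and disjoint topmost output
labels, and every union has no topmost input labels and disjoint topmost
output labels. -/
def WF : PType → Prop
  | .inter T₁ T₂ => WF T₁ ∧ WF T₂ ∧ lin T₁ ∩ lin T₂ = ∅ ∧ lout T₁ ∩ lout T₂ = ∅
  | .union T₁ T₂ => WF T₁ ∧ WF T₂ ∧ lin T₁ = ∅ ∧ lin T₂ = ∅ ∧ lout T₁ ∩ lout T₂ = ∅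
  | .inp _ _ _ T => WF T
  | .out _ _ _ T => WF T
  | .mu T => WF T
  | _ => True

/-! Monitors, their LTS, and the translation to process types. -/

/-- Monitors (local types): external-choice inputs `p?{λᵢ(Sᵢ).Mᵢ}`,
internal-choice outputs `q!{λᵢ(Sᵢ).Mᵢ}`, recursion, `end`.
A branch is a triple (label, sort, continuation). -/
inductive Monitor : Type where
  | mEnd : Monitor
  | mVar : ℕ → Monitor
  | mu : Monitor → Monitor
  | inp : ℕ → List (ℕ × ℕ × Monitor) → Monitor
  | out : ℕ → List (ℕ × ℕ × Monitor) → Monitor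

/-- Labels of the monitor LTS: `p?λ` and `q!λ`. -/
inductive MLabel : Type where
  | recv : ℕ → ℕ → MLabel
  | send : ℕ → ℕ → MLabel

/-- Monitor LTS: `p?{λᵢ(Sᵢ).Mᵢ} --p?λⱼ--> Mⱼ` and `q!{λᵢ(Sᵢ).Mᵢ} --q!λⱼ--> Mⱼ`. -/
inductive MStep : Monitor → MLabel → Monitor → Prop where
  | inp {p l S M' bs} : (l, S, M') ∈ bs → MStep (.inp p bs) (.recv p l) M'
  | out {q l S M' bs} : (l, S, M') ∈ bs → MStep (.out q bs) (.send q l) M'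

/-- Translation `⌊·⌋` of monitors into process types: intersection of the input
branches, union of the output branches. -/
def mt : Monitor → PType
  | .mEnd => .tEnd
  | .mVar t => .tVar t
  | .mu M => .mu (mt M)
  | .inp p bs =>
      (bs.attach.map (fun b => PType.inp p b.1.1 b.1.2.1 (mt b.1.2.2))).foldr .inter .tEnd
  | .out q bs =>
      (bs.attach.map (fun b => PType.out q b.1.1 b.1.2.1 (mt b.1.2.2))).foldr .union .tEnd
decreasing_by
  all_goals first
    | (obtain ⟨⟨l, S, M'⟩, hb⟩ := b
       have h1 := List.sizeOf_lt_of_mem hb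
       simp_wf
       simp only [Prod.mk.sizeOf_spec] at h1
       omega)
    | simp_wf

/-- Adequacy: a process type `T` is adequate for a monitor `M`, written
`T ∝ M`, iff `T ≤ ⌊M⌋`. -/
def Adequate (T : PType) (M : Monitor) : Prop := Sub T (mt M)

/-! Extended values, expressions, processes. -/

/-- Extended values: proper values or nonces. -/
inductive EVal : Type where
  | val : ℕ → EVal
  | nonce : ℕ → EVal
deriving DecidableEq

/-- The security level of an extended value, given the level assignment `lv`
on proper values; nonces have level `⊥`. -/
def lev {L : Type} [Bot L] (lv : ℕ → L) : EVal → L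
  | .val v => lv v
  | .nonce _ => ⊥

/-- Nonces have every sort; values have the sort given by `sortOf`. -/
def hasSort (sortOf : ℕ → ℕ) : EVal → ℕ → Prop
  | .val v, S => sortOf v = S
  | .nonce _, _ => True

/-- An (evaluated) expression: its sort, its resulting extended value, and its
security level. -/
structure Expr (L : Type) where
  sort : ℕ
  res : EVal
  lvl : L

/-- Processes: inaction, input `c?p,λ(x).P` (the binder is rendered by a
continuation function on extended values), output `c!q,λ(e).P`, conditional,
and external choice. -/
inductive Proc (L : Type) : Type where
  | nil : Proc L
  | recv : ℕ → ℕ → (EVal → Proc L) → Proc L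
  | send : ℕ → ℕ → Expr L → Proc L → Proc L
  | ite : Expr L → Proc L → Proc L → Proc L
  | sum : Proc L → Proc L → Proc L

/-- Labels of the process LTS: input `?λ(u)`, output `!λ(u)` (with the partner
recorded), and security levels `ℓ` of tested conditional expressions. -/
inductive PLabel (L : Type) : Type where
  | inp : ℕ → ℕ → EVal → PLabel L
  | out : ℕ → ℕ → EVal → PLabel L
  | lvl : L → PLabel L

/-- The LTS of processes (Table 4); `val 1` is `true` and `val 0` is `false`. -/
inductive PStep {L : Type} : Proc L → PLabel L → Proc L → Prop where
  | recv {p l cont u} : PStep (.recv p l cont) (.inp p l u) (cont u)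
  | send {q l e P u} : e.res = u → PStep (.send q l e P) (.out q l u) P
  | iteT {e P Q} : e.res = .val 1 → PStep (.ite e P Q) (.lvl e.lvl) P
  | iteF {e P Q} : e.res = .val 0 → PStep (.ite e P Q) (.lvl e.lvl) Q
  | sumL {P Q α P'} : (∀ ℓ, α ≠ .lvl ℓ) → PStep P α P' → PStep (.sum P Q) α P'
  | sumR {P Q α Q'} : (∀ ℓ, α ≠ .lvl ℓ) → PStep Q α Q' → PStep (.sum P Q) α Q'
  | sumLvlL {P Q ℓ P'} : PStep P (.lvl ℓ) P' → PStep (.sum P Q) (.lvl ℓ) (.sum P' Q)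
  | sumLvlR {P Q ℓ Q'} : PStep Q (.lvl ℓ) Q' → PStep (.sum P Q) (.lvl ℓ) (.sum P Q')

/-- The typing judgment for processes (Table 2); sort `0` plays the role of
`bool`. -/
inductive Typing {L : Type} (sortOf : ℕ → ℕ) : Proc L → PType → Prop where
  | nil : Typing sortOf .nil .tEnd
  | recv {p l S cont T} :
      (∀ u, hasSort sortOf u S → Typing sortOf (cont u) T) →
      Typing sortOf (.recv p l cont) (.inp p l S T)
  | send {q l : ℕ} {e : Expr L} {P T} : Typing sortOf P T →
      Typing sortOf (.send q l e P) (.out q l e.sort T)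
  | ite {e : Expr L} {P Q T₁ T₂} : e.sort = 0 →
      Typing sortOf P T₁ → Typing sortOf Q T₂ → WF (.union T₁ T₂) →
      Typing sortOf (.ite e P Q) (.union T₁ T₂)
  | sum {P Q T₁ T₂} : Typing sortOf P T₁ → Typing sortOf Q T₂ → WF (.inter T₁ T₂) →
      Typing sortOf (.sum P Q) (.inter T₁ T₂)

/-! Networks: monitored processes, queues, and the reduction rules. -/

/-- A message `p → q : λ(u)` in a session queue. -/
structure Msg : Type where
  sender : ℕ
  receiver : ℕ
  lbl : ℕ
  content : EVal
deriving DecidableEq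

/-- A session queue. -/
abbrev Queue : Type := List Msg

/-- A monitored process `M^{r,w}[P]`: a monitor together with its reading
permission `r`, writing permission `w` and controlled process. -/
structure MProc (L : Type) where
  mon : Monitor
  r : L
  w : L
  proc : Proc L

/-- A (single-session) network: an assignment of monitored processes to
participants, together with the session queue. -/
abbrev Net (L : Type) : Type := (ℕ → Option (MProc L)) × Queue

/-- Update the participant assignment at `p`. -/
def updateNet {L : Type} (f : ℕ → Option (MProc L)) (p : ℕ) (m : MProc L) :
    ℕ → Option (MProc L) :=
  fun q => if q = p then some m else f q

/-- Names of the network reduction rules of Table 5. -/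
inductive Rule : Type where
  | upLev | inR | outR | inGlob | outGlob | inLoc | outLoc | refresh
deriving DecidableEq

/-- The monitored reduction of networks (Table 5), tagged with the rule used.
`lv` assigns security levels to values, `sortOf` sorts to values. -/
inductive Red {L : Type} [Lattice L] [BoundedOrder L] (lv : ℕ → L) (sortOf : ℕ → ℕ) :
    Net L → Rule → Net L → Prop where
  | upLev {f : ℕ → Option (MProc L)} {h : Queue} {p : ℕ} {M : Monitor} {r w ℓ : L}
      {P P' : Proc L} :
      f p = some ⟨M, r, w, P⟩ → PStep P (.lvl ℓ) P' →
      Red lv sortOf (f, h) .upLev (updateNet f p ⟨M, r, w ⊔ ℓ, P'⟩, h)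
  | inR {f : ℕ → Option (MProc L)} {h : Queue} {p q l : ℕ} {u : EVal} {M M' : Monitor}
      {r w : L} {P P' : Proc L} :
      f p = some ⟨M, r, w, P⟩ → MStep M (.recv q l) M' →
      PStep P (.inp q l u) P' → lev lv u ≤ r →
      Red lv sortOf (f, ⟨q, p, l, u⟩ :: h) .inR (updateNet f p ⟨M', r, w, P'⟩, h)
  | outR {f : ℕ → Option (MProc L)} {h : Queue} {p q l : ℕ} {u : EVal} {M M' : Monitor}
      {r w : L} {P P' : Proc L} :
      f p = some ⟨M, r, w, P⟩ → MStep M (.send q l) M' →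
      PStep P (.out q l u) P' →
      ((∃ i, u = .nonce i) ∨ (∃ v, u = .val v ∧ w ≤ lv v)) →
      Red lv sortOf (f, h) .outR (updateNet f p ⟨M', r, w, P'⟩, h ++ [⟨p, q, l, u⟩])
  | inGlob {f : ℕ → Option (MProc L)} {h : Queue} {p q l v i : ℕ} {M M' : Monitor}
      {r w : L} {P P' : Proc L} :
      f p = some ⟨M, r, w, P⟩ → MStep M (.recv q l) M' →
      PStep P (.inp q l (.nonce i)) P' → ¬ lv v ≤ r →
      Red lv sortOf (f, ⟨q, p, l, .val v⟩ :: h) .inGlob (updateNet f p ⟨M', r, w, P'⟩, h)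
  | outGlob {f : ℕ → Option (MProc L)} {h : Queue} {p q l v i : ℕ} {M M' Mq : Monitor}
      {r w r' w' : L} {P P' Q : Proc L} :
      p ≠ q → f p = some ⟨M, r, w, P⟩ → f q = some ⟨Mq, r', w', Q⟩ →
      MStep M (.send q l) M' → PStep P (.out q l (.val v)) P' → ¬ w ≤ lv v →
      Red lv sortOf (f, h) .outGlob
        (updateNet f p ⟨M', r ⊓ r', w, P'⟩, h ++ [⟨p, q, l, .nonce i⟩])
  | inLoc {f : ℕ → Option (MProc L)} {h : Queue} {p q l v : ℕ} {M M' : Monitor}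
      {r w : L} {P P' : Proc L} {T : PType} :
      f p = some ⟨M, r, w, P⟩ → MStep M (.recv q l) M' →
      Typing sortOf P' T → Adequate T M' → ¬ lv v ≤ r →
      Red lv sortOf (f, ⟨q, p, l, .val v⟩ :: h) .inLoc (updateNet f p ⟨M', r, w, P'⟩, h)
  | outLoc {f : ℕ → Option (MProc L)} {h : Queue} {p q l v S : ℕ} {M M' Mq' : Monitor}
      {bs : List (ℕ × ℕ × Monitor)} {r w r' w' : L} {P P' Q Q' : Proc L} {T : PType} :
      p ≠ q → f p = some ⟨M, r, w, P⟩ → f q = some ⟨.inp p bs, r', w', Q⟩ →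
      MStep M (.send q l) M' → PStep P (.out q l (.val v)) P' →
      (l, S, Mq') ∈ bs → Typing sortOf Q' T → Adequate T Mq' → ¬ w ≤ lv v →
      Red lv sortOf (f, h) .outLoc
        (updateNet (updateNet f p ⟨M', r ⊓ r', w, P'⟩) q ⟨Mq', r', w', Q'⟩, h)
  | refresh {f f' : ℕ → Option (MProc L)} {h : Queue} {Aff : Finset ℕ} :
      (∀ p ∉ Aff, f' p = f p) → (∀ p ∈ Aff, f' p = none) →
      Red lv sortOf (f, h) .refresh
        (f', h.filter (fun m => decide (m.sender ∉ Aff ∧ m.receiver ∉ Aff)))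

/-- One-step network reduction by some rule. -/
def RedAny {L : Type} [Lattice L] [BoundedOrder L] (lv : ℕ → L) (sortOf : ℕ → ℕ)
    (n n' : Net L) : Prop := ∃ ρ, Red lv sortOf n ρ n'

/-- The output check of rule Out: `u` is a nonce, or a value of level at least
the writing permission `w`. -/
def OutCheck {L : Type} [Lattice L] [BoundedOrder L] (lv : ℕ → L) (w : L) (u : EVal) : Prop :=
  (∃ i, u = EVal.nonce i) ∨ (∃ v, u = EVal.val v ∧ w ≤ lv v)

/-- Structural equivalence of queues: generated by swapping adjacent messages
with different senders or different receivers. -/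
inductive QEquiv : Queue → Queue → Prop where
  | refl (h) : QEquiv h h
  | symm {h h'} : QEquiv h h' → QEquiv h' h
  | trans {h₁ h₂ h₃} : QEquiv h₁ h₂ → QEquiv h₂ h₃ → QEquiv h₁ h₃
  | swap {h₁ h₂ : Queue} {m m' : Msg} :
      (m.sender ≠ m'.sender ∨ m.receiver ≠ m'.receiver) →
      QEquiv (h₁ ++ m :: m' :: h₂) (h₁ ++ m' :: m :: h₂)
/-! Each type is read as a predicate on processes that records only its input obligations:
a topmost prefix `p?λ(S).T` demands that every `p?λ(u)` step with `u` of sort `S` lead to a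
typable process whose type lies below `T`. Subtyping is sound for this reading, and a typable
process satisfies its type: in a sum `P + Q : T₁ ∧ T₂` the input steps of `Q` cannot disturb
the obligations of `T₁`, because well-formedness makes `lin T₁` and `lin T₂` disjoint. -/

section Semantics

variable {L : Type} {sortOf : ℕ → ℕ}

def Sem (sortOf : ℕ → ℕ) : PType → Proc L → Prop
  | .inp p l S T, P => ∀ u P', hasSort sortOf u S → PStep P (.inp p l u) P' →
      ∃ T'', Typing sortOf P' T'' ∧ Sub T'' T
  | .inter T₁ T₂, P => Sem sortOf T₁ P ∧ Sem sortOf T₂ P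
  | .union T₁ T₂, P => Sem sortOf T₁ P ∨ Sem sortOf T₂ P
  | _, _ => True

theorem Sem.of_sub {T₁ T₂ : PType} (h : Sub T₁ T₂) {P : Proc L} (hP : Sem sortOf T₁ P) :
    Sem sortOf T₂ P := by
  induction h with
  | refl => exact hP
  | trans _ _ ih₁ ih₂ => exact ih₂ (ih₁ hP)
  | interL => exact hP.1
  | interR => exact hP.2
  | unionL => exact Or.inl hP
  | unionR => exact Or.inr hP
  | inpCov hs =>
      intro u P' hu hst
      obtain ⟨T'', hT'', hsub⟩ := hP u P' hu hst
      exact ⟨T'', hT'', hsub.trans hs⟩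
  | interGlb _ _ ih₁ ih₂ => exact ⟨ih₁ hP, ih₂ hP⟩
  | unionLub _ _ ih₁ ih₂ => exact hP.elim ih₁ ih₂
  | distInter _ _ ih₁ ih₂ =>
      obtain ⟨h₁ | h₂, h₃⟩ := hP
      exacts [ih₁ ⟨h₁, h₃⟩, ih₂ ⟨h₂, h₃⟩]
  | distUnion _ _ ih₁ ih₂ =>
      rcases ih₁ hP with h₁ | h₃
      · exact (ih₂ hP).imp (fun h₂ => ⟨h₁, h₂⟩) id
      · exact Or.inr h₃
  | endTop | outCov | muCov => trivial

theorem Sem.of_inp_steps {T : PType} {P R : Proc L} (hP : Sem sortOf T P)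
    (hR : ∀ p l u R', l ∈ lin T → PStep R (.inp p l u) R' → PStep P (.inp p l u) R') :
    Sem sortOf T R := by
  induction T with
  | inp p l S T _ => exact fun u R' hu hst => hP u R' hu (hR _ _ _ _ (by simp [lin]) hst)
  | inter T₁ T₂ ih₁ ih₂ =>
      exact ⟨ih₁ hP.1 fun p l u R' hl => hR p l u R' (Finset.mem_union_left _ hl),
        ih₂ hP.2 fun p l u R' hl => hR p l u R' (Finset.mem_union_right _ hl)⟩
  | union T₁ T₂ ih₁ ih₂ =>
      exact hP.imp (ih₁ · fun p l u R' hl => hR p l u R' (Finset.mem_union_left _ hl))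
        (ih₂ · fun p l u R' hl => hR p l u R' (Finset.mem_union_right _ hl))
  | tEnd | tVar | mu | out => trivial

theorem Typing.mem_lin_of_step {P P' : Proc L} {T : PType} {p l : ℕ} {u : EVal}
    (hT : Typing sortOf P T) (hst : PStep P (.inp p l u) P') : l ∈ lin T := by
  induction hT generalizing P' with
  | recv => cases hst; simp [lin]
  | sum _ _ _ ih₁ ih₂ =>
      cases hst with
      | sumL _ h => exact Finset.mem_union_left _ (ih₁ h)
      | sumR _ h => exact Finset.mem_union_right _ (ih₂ h)
  | nil | send | ite => cases hst

theorem PStep.sum_inp_left {P Q R : Proc L} {T₂ : PType} {p l : ℕ} {u : EVal}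
    (hQ : Typing sortOf Q T₂) (hl : l ∉ lin T₂) (hst : PStep (.sum P Q) (.inp p l u) R) :
    PStep P (.inp p l u) R := by
  cases hst with
  | sumL _ h => exact h
  | sumR _ h => exact absurd (hQ.mem_lin_of_step h) hl

theorem PStep.sum_inp_right {P Q R : Proc L} {T₁ : PType} {p l : ℕ} {u : EVal}
    (hP : Typing sortOf P T₁) (hl : l ∉ lin T₁) (hst : PStep (.sum P Q) (.inp p l u) R) :
    PStep Q (.inp p l u) R := by
  cases hst with
  | sumL _ h => exact absurd (hP.mem_lin_of_step h) hl
  | sumR _ h => exact h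

theorem Typing.sem {P : Proc L} {T : PType} (hT : Typing sortOf P T) : Sem sortOf T P := by
  induction hT with
  | nil | send => trivial
  | recv h =>
      intro u P' hu hst
      cases hst
      exact ⟨_, h u hu, Sub.refl _⟩
  | ite _ _ _ _ ihP => exact Or.inl (ihP.of_inp_steps fun _ _ _ _ _ hst => by cases hst)
  | @sum P Q T₁ T₂ hP hQ hwf ihP ihQ =>
      have hdisj : Disjoint (lin T₁) (lin T₂) := Finset.disjoint_iff_inter_eq_empty.2 hwf.2.2.1
      exact ⟨ihP.of_inp_steps fun _ _ _ _ hl =>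
          PStep.sum_inp_left hQ (Finset.disjoint_left.1 hdisj hl),
        ihQ.of_inp_steps fun _ _ _ _ hl =>
          PStep.sum_inp_right hP (Finset.disjoint_right.1 hdisj hl)⟩

end Semantics

/-- subject reduction for the process LTS: if `P` has type `T`
with `T ≤ p?λ(S).T'` and `P --?λ(u)--> P'` with `u` of sort `S`, then `P'` is
typable with some type `T'' ≤ T'`. -/
theorem subject_reduction_input {L : Type} {sortOf : ℕ → ℕ} {P P' : Proc L}
    {T T' : PType} {p l S : ℕ} {u : EVal}
    (hT : Typing sortOf P T) (hsub : Sub T (.inp p l S T'))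
    (hstep : PStep P (.inp p l u) P') (hu : hasSort sortOf u S) :
    ∃ T'', Typing sortOf P' T'' ∧ Sub T'' T' :=
  Sem.of_sub hsub hT.sem u P' hu hstep

end MPS
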